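/- Let L = { 1 0ⁿ 2 (0⁺3)ⁿ : n ≥ 1 } over the alphabet {0,1,2,3}. Then the languages L_{a,0} for a ≥ 2 are pairwise distinct; in particular, the family { L_{a,0} : a ≥ 1 } is infinite. -/

import Mathlib

/-- `filt a b w` is the word formed by the letters of `w` at positions
`b, a+b, 2a+b, …` that are less than `|w|`. -/
def filt {α : Type*} (a b : ℕ) (w : List α) : List α :=
  (List.range w.length).filterMap (fun i => w[a * i + b]?)

/-- `filtL a b L = { w_{a,b} : w ∈ L }`. -/
def filtL {α : Type*} (a b : ℕ) (L : Language α) : Language α :=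
  (filt a b) '' L

/-- The word `1 0ⁿ 2 0^{k₁} 3 ⋯ 0^{kₘ} 3` over the alphabet `{0,1,2,3}`. -/
def Lword (n : ℕ) (ks : List ℕ) : List (Fin 4) :=
  1 :: (List.replicate n 0 ++ 2 :: (ks.map (fun k => List.replicate k (0 : Fin 4) ++ [3])).flatten)

/-- The language `{ 1 0ⁿ 2 (0⁺3)ⁿ : n ≥ 1 }`. -/
def L : Language (Fin 4) :=
  { w | ∃ n : ℕ, 1 ≤ n ∧ ∃ ks : List ℕ,
      ks.length = n ∧ (∀ k ∈ ks, 1 ≤ k) ∧ w = Lword n ks }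

/-! The word `1 2 3^(a-1)` lies in `L_{a,0}`: it is what every `a`-th letter of
`1 0^(a-1) 2 (0^(a-1) 3)^(a-1)` spells. Conversely, if `w = 1 0^n 2 ⋯ ∈ L` filters to `1 2 3^t`,
then the letter `2` sits at position `a` of `w`, forcing `a = n + 1`, while `w` contains only
`n` letters `3`, so `t ≤ n < a`. Hence `a - 1 < a'` and `a' - 1 < a` whenever
`L_{a,0} = L_{a',0}`. -/

section Filt

variable {α : Type*} {a : ℕ}

theorem filt_eq_filterMap_range (ha : 1 ≤ a) (b : ℕ) {w : List α} {m : ℕ} (hm : w.length ≤ m) :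
    filt a b w = (List.range m).filterMap (fun i => w[a * i + b]?) := by
  obtain ⟨d, rfl⟩ := Nat.exists_eq_add_of_le hm
  rw [List.range_add, List.filterMap_append, List.filterMap_map, filt, List.self_eq_append_right,
    List.filterMap_eq_nil_iff]
  intro i _
  apply List.getElem?_eq_none
  nlinarith

theorem filt_nil (a b : ℕ) : filt a b ([] : List α) = [] := rfl

theorem filt_cons (ha : 1 ≤ a) (x : α) (w : List α) :
    filt a 0 (x :: w) = x :: filt a 0 (w.drop (a - 1)) := by
  rw [filt_eq_filterMap_range ha 0 (w := w.drop (a - 1)) (m := w.length) (by simp), filt,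
    List.length_cons, List.range_succ_eq_map, List.filterMap_cons, List.filterMap_map]
  simp only [mul_zero, add_zero, List.getElem?_cons_zero]
  congr 1
  refine List.filterMap_congr fun i _ => ?_
  rw [Function.comp_apply, List.getElem?_drop, Nat.succ_eq_add_one,
    show a * (i + 1) = a - 1 + a * i + 1 by rw [Nat.mul_succ]; omega]
  rfl

theorem filt_sublist (ha : 1 ≤ a) : ∀ w : List α, (filt a 0 w).Sublist w
  | [] => List.Sublist.slnil
  | x :: w => by
    rw [filt_cons ha]
    exact ((filt_sublist ha (w.drop (a - 1))).trans (List.drop_sublist _ _)).cons_cons x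
termination_by w => w.length

theorem getElem?_filt (ha : 1 ≤ a) : ∀ (w : List α) (i : ℕ), (filt a 0 w)[i]? = w[a * i]?
  | [], _ => by simp [filt_nil]
  | x :: w, 0 => by simp [filt_cons ha]
  | x :: w, i + 1 => by
    rw [filt_cons ha, List.getElem?_cons_succ, getElem?_filt ha, List.getElem?_drop,
      show a * (i + 1) = a - 1 + a * i + 1 by rw [Nat.mul_succ]; omega]
    rfl
termination_by w => w.length

theorem filt_flatten_blocks (z x : α) (cs : List α) :
    filt (a + 1) 0 (x :: (cs.map fun c => List.replicate a z ++ [c]).flatten) = x :: cs := by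
  induction cs generalizing x with
  | nil => rfl
  | cons c cs ih =>
    rw [filt_cons (by omega), List.map_cons, List.flatten_cons, Nat.add_sub_cancel,
      List.append_assoc, List.drop_left' (by simp), List.singleton_append, ih]

end Filt

theorem List.eq_length_of_getElem?_append_cons_eq {α : Type*} {l₁ l₂ : List α} {x : α} {i : ℕ}
    (h₁ : x ∉ l₁) (h₂ : x ∉ l₂) (h : (l₁ ++ x :: l₂)[i]? = some x) : i = l₁.length := by
  rcases lt_trichotomy i l₁.length with hi | hi | hi
  · rw [List.getElem?_append_left hi] at h
    exact absurd (List.mem_of_getElem? h) h₁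
  · exact hi
  · rw [List.getElem?_append_right hi.le, show i - l₁.length = i - l₁.length - 1 + 1 by omega,
      List.getElem?_cons_succ] at h
    exact absurd (List.mem_of_getElem? h) h₂

theorem count_three_Lword (n : ℕ) (ks : List ℕ) : (Lword n ks).count 3 = ks.length := by
  simp [Lword, List.count_flatten, List.count_replicate, Function.comp_def]

theorem eq_succ_of_getElem?_Lword_eq_two {n i : ℕ} {ks : List ℕ} (h : (Lword n ks)[i]? = some 2) :
    i = n + 1 := by
  rw [Lword, ← List.cons_append] at h
  simpa using List.eq_length_of_getElem?_append_cons_eq (by simp [List.mem_replicate])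
    (by simp [List.mem_replicate]) h

theorem Lword_replicate (m : ℕ) : Lword m (List.replicate m m) =
    1 :: ((2 :: List.replicate m 3).map fun c => List.replicate m 0 ++ [c]).flatten := by
  simp [Lword, List.map_replicate]

theorem mem_filtL_L {a : ℕ} (ha : 2 ≤ a) : 1 :: 2 :: List.replicate (a - 1) 3 ∈ filtL a 0 L := by
  obtain ⟨m, rfl⟩ := Nat.exists_eq_add_of_le' ha
  refine ⟨_, ⟨m + 1, by omega, List.replicate (m + 1) (m + 1), List.length_replicate,
    fun k hk => by rw [List.eq_of_mem_replicate hk]; omega, rfl⟩, ?_⟩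
  show filt (m + 1 + 1) 0 _ = 1 :: 2 :: List.replicate (m + 1) 3
  rw [Lword_replicate, filt_flatten_blocks]

theorem lt_of_mem_filtL_L {a t : ℕ} (ha : 1 ≤ a) (h : 1 :: 2 :: List.replicate t 3 ∈ filtL a 0 L) :
    t < a := by
  obtain ⟨_, ⟨n, -, ks, rfl, -, rfl⟩, hw⟩ := h
  have ha_eq : a = ks.length + 1 := by
    apply eq_succ_of_getElem?_Lword_eq_two
    rw [← mul_one a, ← getElem?_filt ha, hw]
    rfl
  have hcount :=
    ((filt_sublist ha (Lword ks.length ks)).count_le 3).trans_eq (count_three_Lword _ ks)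
  rw [hw] at hcount
  simp only [ne_eq, Fin.reduceEq, not_false_eq_true, List.count_cons_of_ne,
    List.count_replicate_self] at hcount
  omega

theorem filtL_L_injOn : Set.InjOn (fun a => filtL a 0 L) (Set.Ici 2) := by
  intro a (ha : 2 ≤ a) a' (ha' : 2 ≤ a') (h : filtL a 0 L = filtL a' 0 L)
  have h₁ := lt_of_mem_filtL_L (by omega) (h ▸ mem_filtL_L ha)
  have h₂ := lt_of_mem_filtL_L (by omega) (h ▸ mem_filtL_L ha')
  omega

theorem filtL_weak_distinct :
    (∀ a a' : ℕ, 2 ≤ a → 2 ≤ a' → filtL a 0 L = filtL a' 0 L → a = a') ∧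
      {M : Language (Fin 4) | ∃ a : ℕ, 1 ≤ a ∧ M = filtL a 0 L}.Infinite := by
  refine ⟨fun a a' ha ha' => filtL_L_injOn ha ha', ?_⟩
  refine ((Set.Ici_infinite 2).image filtL_L_injOn).mono ?_
  rintro _ ⟨a, ha, rfl⟩
  exact ⟨a, by grind, rfl⟩
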